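/- The complete graph K_n is determined by its reciprocal distance Laplacian spectrum: if G is a connected graph on n vertices whose RD^L-spectrum equals {0, n^{(n−1)}}, then G ≅ K_n. -/

import Mathlib

open Matrix Polynomial

/-- The reciprocal distance (Harary) matrix of a graph: `(i,j)`-entry is `1/d(i,j)`
for `i ≠ j` and `0` on the diagonal. -/
noncomputable def RD {V : Type*} [Fintype V] [DecidableEq V] (G : SimpleGraph V) :
    Matrix V V ℝ :=
  fun u v => if u = v then 0 else ((G.dist u v : ℝ))⁻¹

/-- The reciprocal distance degree of a vertex: `RTr(v) = ∑_{u ≠ v} 1/d(v,u)`. -/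
noncomputable def RTr {V : Type*} [Fintype V] [DecidableEq V] (G : SimpleGraph V) (v : V) : ℝ :=
  ∑ u, RD G v u

/-- The reciprocal distance Laplacian matrix `RD^L(G) = RT(G) - RD(G)`. -/
noncomputable def RDL {V : Type*} [Fintype V] [DecidableEq V] (G : SimpleGraph V) :
    Matrix V V ℝ :=
  Matrix.diagonal (RTr G) - RD G

/-- `e : Fin n → ℝ` enumerates the eigenvalues of `M` in (weakly) decreasing order,
with multiplicities, where the eigenvalues (with multiplicity) are the roots of the
characteristic polynomial. -/
def IsEigEnum {V : Type*} [Fintype V] [DecidableEq V] (M : Matrix V V ℝ)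
    (e : Fin (Fintype.card V) → ℝ) : Prop :=
  Antitone e ∧ (↑(List.ofFn e) : Multiset ℝ) = M.charpoly.roots

/-!
Both sides of `tr RD^L(G) = ∑_{u ≠ v} 1/d(u,v)` are computed. The spectrum gives the value
`n(n-1)`, while every summand is at most `1`, with equality only for adjacent `u, v`
(an unreachable pair has `d = 0`, whose inverse is `0`). So every pair of distinct vertices
is adjacent.
-/

theorem Matrix.trace_eq_sum_roots_charpoly_of_card_roots {R n : Type*} [CommRing R] [IsDomain R]
    [Fintype n] [DecidableEq n] {M : Matrix n n R}
    (h : M.charpoly.roots.card = Fintype.card n) :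
    M.trace = M.charpoly.roots.sum :=
  trace_eq_sum_roots_charpoly_of_splits <| by
    rwa [splits_iff_card_roots, charpoly_natDegree_eq_dim]

theorem Nat.cast_inv_lt_one_of_ne_one {α : Type*} [Semifield α] [LinearOrder α]
    [IsStrictOrderedRing α] {d : ℕ} (h : d ≠ 1) : ((d : α))⁻¹ < 1 := by
  rcases Nat.lt_or_gt_of_ne h with hd | hd
  · simp [Nat.lt_one_iff.mp hd]
  · exact inv_lt_one_of_one_lt₀ (by exact_mod_cast hd)

section ReciprocalDistance

variable {V : Type*} [Fintype V] [DecidableEq V] (G : SimpleGraph V)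

theorem RD_self (u : V) : RD G u u = 0 := if_pos rfl

theorem RD_of_ne {u v : V} (h : u ≠ v) : RD G u v = ((G.dist u v : ℝ))⁻¹ := if_neg h

theorem RD_le_one (u v : V) : RD G u v ≤ 1 := by
  by_cases h : u = v
  · simp [h, RD_self]
  · exact (RD_of_ne G h).trans_le (Nat.cast_inv_le_one _)

theorem RD_lt_one_of_not_adj {u v : V} (hne : u ≠ v) (hadj : ¬G.Adj u v) : RD G u v < 1 := by
  rw [RD_of_ne G hne]
  exact Nat.cast_inv_lt_one_of_ne_one (mt G.dist_eq_one_iff_adj.mp hadj)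

theorem trace_RDL : (RDL G).trace = ∑ u, ∑ v, RD G u v := by
  simp [RDL, trace, RD_self, RTr]

theorem sum_RD_eq_sum_offDiag :
    ∑ u, ∑ v, RD G u v = ∑ p ∈ (Finset.univ : Finset V).offDiag, RD G p.1 p.2 := by
  rw [← Finset.sum_product' (f := fun u v => RD G u v)]
  refine (Finset.sum_subset (fun p hp => ?_) fun p _ hp => ?_).symm
  · simp
  · rw [show p.1 = p.2 by simpa using hp, RD_self]

theorem sum_RD_lt_of_ne_top (h : G ≠ ⊤) :
    ∑ u, ∑ v, RD G u v < (Fintype.card V : ℝ) * (Fintype.card V - 1) := by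
  obtain ⟨u, v, hne, hadj⟩ := SimpleGraph.ne_top_iff_exists_not_adj.mp h
  calc ∑ u, ∑ v, RD G u v
      = ∑ p ∈ (Finset.univ : Finset V).offDiag, RD G p.1 p.2 := sum_RD_eq_sum_offDiag G
    _ < ∑ _p ∈ (Finset.univ : Finset V).offDiag, (1 : ℝ) :=
        Finset.sum_lt_sum (fun p _ => RD_le_one G p.1 p.2)
          ⟨(u, v), by simpa using hne, RD_lt_one_of_not_adj G hne hadj⟩
    _ = (Fintype.card V : ℝ) * (Fintype.card V - 1) := by
        rw [Finset.sum_const, Finset.offDiag_card, Finset.card_univ, nsmul_one,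
          Nat.cast_sub (Nat.le_mul_self _), Nat.cast_mul]
        ring

end ReciprocalDistance

theorem stmt19_general {V : Type*} [Fintype V] [DecidableEq V] (G : SimpleGraph V)
    (hspec : (RDL G).charpoly.roots =
      0 ::ₘ Multiset.replicate (Fintype.card V - 1) ((Fintype.card V : ℝ))) :
    G = (⊤ : SimpleGraph V) := by
  by_contra hG
  set n := Fintype.card V
  have hn : 1 ≤ n := by
    obtain ⟨u, -⟩ := SimpleGraph.ne_top_iff_exists_not_adj.mp hG
    exact Fintype.card_pos_iff.mpr ⟨u⟩
  have htrace : (RDL G).trace = n * (n - 1) := by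
    rw [trace_eq_sum_roots_charpoly_of_card_roots (by simp [hspec]; omega), hspec]
    simp [Nat.cast_sub hn, mul_comm]
  exact (sum_RD_lt_of_ne_top G hG).ne (by rw [← trace_RDL, htrace])

theorem stmt19 {V : Type*} [Fintype V] [DecidableEq V] (G : SimpleGraph V)
    (hc : G.Connected)
    (hspec : (RDL G).charpoly.roots =
      0 ::ₘ Multiset.replicate (Fintype.card V - 1) ((Fintype.card V : ℝ))) :
    G = (⊤ : SimpleGraph V) :=
  stmt19_general G hspec
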